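/- Let B be a Haar measurable subset of 𝕋 with μ(B) > 0, and let λ < 1. Then there exist only finitely many integers n such that μ(n·B) ≤ λ. -/

import Mathlib

/-!
Choose a closed `K ⊆ B` of positive measure, a constant `l < c < 1`, and a Lebesgue density
point `x` of the lift `A ⊆ ℝ` of `K`. For `|n|` large, `A` fills more than the fraction `c` of
the ball of radius `1 / (2|n|)` about `x`. Multiplication by `n` stretches that piece of `A` onto
an interval of length `1`, so that its measure becomes more than `c`, and the projection to `𝕋`
is injective on the interval (up to an endpoint) and lands in the closed set `n · K ⊆ n • B`.
-/

open Pointwise MeasureTheory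

/-- The inner Haar measure of a subset of the circle `𝕋 = ℝ/ℤ`:
the supremum of the Haar measures of closed subsets (equal to the Haar measure
for measurable sets). -/
noncomputable def innerHaar (A : Set UnitAddCircle) : ℝ :=
  (⨆ (K : Set UnitAddCircle) (_ : IsClosed K) (_ : K ⊆ A), volume K).toReal

open Set Metric Filter Topology ENNReal

/-- With `Set.ZSMul`, `n • s` is the iterated sumset `s + ⋯ + s`, which contains the dilate. -/
theorem Set.image_zsmul_subset_zsmul {α : Type*} [SubtractionMonoid α] (s : Set α) :
    ∀ n : ℤ, (n • ·) '' s ⊆ n • s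
  | .ofNat m => by
    rintro _ ⟨a, ha, rfl⟩
    simpa only [Int.ofNat_eq_natCast, natCast_zsmul] using Set.nsmul_mem_nsmul ha
  | .negSucc m => by
    rintro _ ⟨a, ha, rfl⟩
    simpa only [negSucc_zsmul] using Set.neg_mem_neg.mpr (Set.nsmul_mem_nsmul ha)

theorem iSup_isClosed_subset_volume_ne_top (A : Set UnitAddCircle) :
    (⨆ (K : Set UnitAddCircle) (_ : IsClosed K) (_ : K ⊆ A), volume K) ≠ ∞ :=
  ne_top_of_le_ne_top (measure_ne_top volume univ)
    (iSup_le fun K => iSup₂_le fun _ _ => measure_mono (subset_univ K))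

theorem toReal_volume_le_innerHaar {A K : Set UnitAddCircle} (hK : IsClosed K) (hKA : K ⊆ A) :
    (volume K).toReal ≤ innerHaar A :=
  ENNReal.toReal_mono (iSup_isClosed_subset_volume_ne_top A)
    (le_iSup₂_of_le K hK (le_iSup_of_le hKA le_rfl))

theorem exists_isClosed_subset_volume_pos_of_innerHaar_pos {A : Set UnitAddCircle}
    (hA : 0 < innerHaar A) : ∃ K, IsClosed K ∧ K ⊆ A ∧ 0 < volume K := by
  by_contra! h
  have hsup : (⨆ (K : Set UnitAddCircle) (_ : IsClosed K) (_ : K ⊆ A), volume K) = 0 := by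
    simpa only [ENNReal.iSup_eq_zero, nonpos_iff_eq_zero] using h
  simp [innerHaar, hsup] at hA

theorem Besicovitch.exists_eventually_mul_measure_closedBall_lt {β : Type*} [MetricSpace β]
    [MeasurableSpace β] [BorelSpace β] [SecondCountableTopology β] [HasBesicovitchCovering β]
    (μ : Measure β) [IsLocallyFiniteMeasure μ] {s : Set β} (hs : μ s ≠ 0) {c : ℝ≥0∞}
    (hc : c < 1) : ∃ x, ∀ᶠ r in 𝓝[>] 0, c * μ (closedBall x r) < μ (s ∩ closedBall x r) := by
  have : (ae (μ.restrict s)).NeBot := ae_neBot.mpr (by simpa using hs)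
  obtain ⟨x, hx⟩ := (Besicovitch.ae_tendsto_measure_inter_div μ s).exists
  exact ⟨x, (hx.eventually (lt_mem_nhds hc)).mono fun _ hr => ENNReal.mul_lt_of_lt_div hr⟩

theorem UnitAddCircle.volume_le_volume_image_coe {S : Set ℝ} {a : ℝ} (hS : S ⊆ Icc a (a + 1)) :
    volume S ≤ volume (((↑) : ℝ → UnitAddCircle) '' S) := calc
  volume S = volume.restrict (Ioc a (a + 1)) S := by
    rw [Measure.restrict_congr_set Ioc_ae_eq_Icc, Measure.restrict_eq_self _ hS]
  _ ≤ volume.restrict (Ioc a (a + 1)) ((↑) ⁻¹' (((↑) : ℝ → UnitAddCircle) '' S)) :=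
    measure_mono (subset_preimage_image _ _)
  _ ≤ volume (((↑) : ℝ → UnitAddCircle) '' S) := by
    rw [← (UnitAddCircle.measurePreserving_mk a).map_eq]
    exact Measure.le_map_apply (by fun_prop) _

theorem UnitAddCircle.ofReal_abs_mul_volume_le_volume_image_zsmul (K : Set UnitAddCircle) {n : ℤ}
    {x r : ℝ} (hr : 0 ≤ r) (hnr : |(n : ℝ)| * r ≤ 1 / 2) :
    ENNReal.ofReal |(n : ℝ)| * volume ((↑) ⁻¹' K ∩ closedBall x r) ≤
      volume ((n • ·) '' K) := by
  set S := ((↑) : ℝ → UnitAddCircle) ⁻¹' K ∩ closedBall x r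
  have hT : (n : ℝ) • S ⊆ Icc (n * x - 1 / 2) (n * x - 1 / 2 + 1) := calc
    (n : ℝ) • S ⊆ (n : ℝ) • closedBall x r := smul_set_mono inter_subset_right
    _ = closedBall (n * x) (|(n : ℝ)| * r) := smul_closedBall _ _ hr
    _ ⊆ closedBall (n * x) (1 / 2) := closedBall_subset_closedBall hnr
    _ = Icc (n * x - 1 / 2) (n * x - 1 / 2 + 1) := by rw [Real.closedBall_eq_Icc]; ring_nf
  have himage : ((↑) : ℝ → UnitAddCircle) '' ((n : ℝ) • S) ⊆ (n • ·) '' K := by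
    rintro _ ⟨_, ⟨s, hs, rfl⟩, rfl⟩
    exact ⟨s, hs.1, by simp⟩
  calc ENNReal.ofReal |(n : ℝ)| * volume S = volume ((n : ℝ) • S) := by
        simp [Measure.addHaar_smul]
  _ ≤ volume (((↑) : ℝ → UnitAddCircle) '' ((n : ℝ) • S)) := volume_le_volume_image_coe hT
  _ ≤ volume ((n • ·) '' K) := measure_mono himage

theorem UnitAddCircle.eventually_lt_volume_image_zsmul {K : Set UnitAddCircle}
    (hK : MeasurableSet K) (hK0 : volume K ≠ 0) {c : ℝ≥0∞} (hc : c < 1) :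
    ∀ᶠ n : ℤ in cofinite, c < volume ((n • ·) '' K) := by
  have hA : volume ((↑) ⁻¹' K : Set ℝ) ≠ 0 := by
    refine fun h => hK0 (le_antisymm ?_ bot_le)
    rw [← (UnitAddCircle.measurePreserving_mk 0).measure_preimage hK.nullMeasurableSet, ← h]
    exact Measure.restrict_le_self _
  obtain ⟨x, hx⟩ := Besicovitch.exists_eventually_mul_measure_closedBall_lt volume hA hc
  have hscale : Tendsto (fun n : ℤ => (2 * |(n : ℝ)|)⁻¹) cofinite (𝓝[>] 0) :=
    tendsto_inv_atTop_nhdsGT_zero.comp <|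
      (tendsto_norm_cocompact_atTop.comp Int.tendsto_coe_cofinite).const_mul_atTop two_pos
  filter_upwards [hscale.eventually hx, eventually_cofinite_ne 0] with n hn hn0
  have habs : 0 < |(n : ℝ)| := by positivity
  have hball : ENNReal.ofReal |(n : ℝ)| * volume (closedBall x (2 * |(n : ℝ)|)⁻¹) = 1 := by
    rw [Real.volume_closedBall, ← ENNReal.ofReal_mul habs.le]
    field_simp
    simp
  calc c = ENNReal.ofReal |(n : ℝ)| * (c * volume (closedBall x (2 * |(n : ℝ)|)⁻¹)) := by
        rw [mul_left_comm, hball, mul_one]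
  _ < ENNReal.ofReal |(n : ℝ)| * volume ((↑) ⁻¹' K ∩ closedBall x (2 * |(n : ℝ)|)⁻¹) :=
        ENNReal.mul_lt_mul_right (ENNReal.ofReal_pos.mpr habs).ne' ofReal_ne_top hn
  _ ≤ volume ((n • ·) '' K) :=
        ofReal_abs_mul_volume_le_volume_image_zsmul K (by positivity) (by field_simp; norm_num)

theorem stmt_14_general (B : Set UnitAddCircle)
    (h0 : 0 < innerHaar B) (l : ℝ) (hl : l < 1) :
    {n : ℤ | innerHaar (n • B) ≤ l}.Finite := by
  obtain ⟨K, hKc, hKB, hK0⟩ := exists_isClosed_subset_volume_pos_of_innerHaar_pos h0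
  obtain ⟨c, hlc, hc1⟩ := exists_between (max_lt hl one_pos)
  have hlarge : ∀ᶠ n : ℤ in cofinite, l < innerHaar (n • B) := by
    filter_upwards [UnitAddCircle.eventually_lt_volume_image_zsmul hKc.measurableSet hK0.ne'
      (ENNReal.ofReal_lt_one.mpr hc1)] with n hn
    calc l < c := (le_max_left l 0).trans_lt hlc
    _ < (volume ((n • ·) '' K)).toReal :=
        (ENNReal.ofReal_lt_iff_lt_toReal ((le_max_right l 0).trans hlc.le) (measure_ne_top _ _)).mp hn
    _ ≤ innerHaar (n • B) :=
        toReal_volume_le_innerHaar (hKc.isCompact.image (continuous_zsmul n)).isClosed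
          ((image_mono hKB).trans (Set.image_zsmul_subset_zsmul B n))
  simpa only [not_lt] using eventually_cofinite.mp hlarge

theorem stmt_14 (B : Set UnitAddCircle) (hB : MeasurableSet B)
    (h0 : 0 < innerHaar B) (l : ℝ) (hl : l < 1) :
    {n : ℤ | innerHaar (n • B) ≤ l}.Finite :=
  stmt_14_general B h0 l hl
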